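/- For every integer n ≥ 1, the sum over all π ∈ 𝓕_n of trun(π) − 1 equals (3^(n−1) − 1)/2; equivalently, 2·Σ_{π ∈ 𝓕_n} (trun(π) − 1) = 3^(n−1) − 1. -/

import Mathlib

open scoped BigOperators

/-- `w` is a Catalan word: it is nonempty, starts with `1`, and each subsequent
letter lies between `1` and the previous letter plus one. -/
def IsCatalan (w : List ℕ) : Prop :=
  w ≠ [] ∧ w.getD 0 0 = 1 ∧
    ∀ i, i + 1 < w.length →
      1 ≤ w.getD (i + 1) 0 ∧ w.getD (i + 1) 0 ≤ w.getD i 0 + 1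

/-- `i` is the starting index of a maximal weakly increasing run of `w`. -/
def RunStart (w : List ℕ) (i : ℕ) : Prop :=
  i < w.length ∧ (i = 0 ∨ w.getD i 0 < w.getD (i - 1) 0)

/-- `w` is flattened: the first letters of its increasing runs, read left to
right, form a weakly nondecreasing sequence. -/
def IsFlattened (w : List ℕ) : Prop :=
  ∀ i j, RunStart w i → RunStart w j → i ≤ j → w.getD i 0 ≤ w.getD j 0

/-- The set of flattened Catalan words of length `n`. -/
def FlatCat (n : ℕ) : Set (List ℕ) :=
  {w | w.length = n ∧ IsCatalan w ∧ IsFlattened w}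

/-- `i` is the starting index of an occurrence of the consecutive pattern `τ`
in the word `w`, i.e. the factor of `w` of length `|τ|` starting at `i` is
order-isomorphic to `τ`. -/
def OccAt (τ w : List ℕ) (i : ℕ) : Prop :=
  i + τ.length ≤ w.length ∧
    ∀ s < τ.length, ∀ t < τ.length,
      (w.getD (i + s) 0 < w.getD (i + t) 0 ↔ τ.getD s 0 < τ.getD t 0)

/-- The number of occurrences of the consecutive pattern `τ` in `w`. -/
noncomputable def numOcc (τ w : List ℕ) : ℕ :=
  Set.ncard {i | OccAt τ w i}

/-- The number of distinct letters in the terminal (rightmost) increasing run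
of `w`, i.e. in the longest weakly increasing suffix of `w`. -/
noncomputable def trun (w : List ℕ) : ℕ :=
  ((w.drop (sInf {i | List.Chain' (· ≤ ·) (w.drop i)})).toFinset).card

/-- The total number of occurrences of the consecutive pattern `τ` over all
flattened Catalan words of length `n`. -/
noncomputable def tot (n : ℕ) (τ : List ℕ) : ℕ :=
  ∑ᶠ w ∈ FlatCat n, numOcc τ w

/-!
Write a word of length `n + 1` as `π c` with `π` of length `n`. If the terminal run of `π` starts
with the letter `a` and ends with `ℓ`, the Catalan condition forces it to contain every letter of
`[a, ℓ]`, so `trun π = ℓ + 1 - a`; and `π c` is a flattened Catalan word exactly when `π` is one and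
`a ≤ c ≤ ℓ + 1`. For `c < ℓ` the terminal run of `π c` is the single letter `c`, while for
`c = ℓ, ℓ + 1` it is the terminal run of `π` followed by `c`. Hence `π` has `trun π + 1` extensions,
and their `trun` values add up to `(ℓ - a) + (ℓ + 1 - a) + (ℓ + 2 - a) = 3 trun π`. By induction,
`∑_{𝓕_n} trun = 3^(n-1)` and `2 |𝓕_n| = 3^(n-1) + 1`, and the claim is the difference of the two.
-/

open Finset

theorem List.toFinset_eq_Icc_of_isChain {a : ℕ} {u : List ℕ}
    (h : (a :: u).IsChain (fun x y => x ≤ y ∧ y ≤ x + 1)) :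
    (a :: u).toFinset = Icc a (u.getLastD a) := by
  induction u generalizing a with
  | nil => simp
  | cons b v ih =>
    obtain ⟨⟨hab, hba⟩, hchain⟩ := List.isChain_cons_cons.1 h
    have hrun := ih hchain
    have hbL : b ≤ v.getLastD b := by
      have := List.mem_toFinset.2 (List.getLastD_mem_cons (l := v) (a := b))
      exact (mem_Icc.1 (hrun ▸ this)).1
    rw [List.toFinset_cons, hrun, List.getLastD_cons]
    ext x
    simp only [mem_insert, mem_Icc]
    omega

noncomputable def lastRunStart (w : List ℕ) : ℕ :=
  sInf {i | (w.drop i).IsChain (· ≤ ·)}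

noncomputable def terminalRun (w : List ℕ) : List ℕ :=
  w.drop (lastRunStart w)

noncomputable def terminalRunHead (w : List ℕ) : ℕ :=
  (terminalRun w).headD 0

section TerminalRun

variable {w : List ℕ} {c i k : ℕ}

theorem trun_eq_card_toFinset_terminalRun (w : List ℕ) :
    trun w = (terminalRun w).toFinset.card :=
  rfl

theorem isChain_terminalRun (w : List ℕ) : (terminalRun w).IsChain (· ≤ ·) :=
  Nat.sInf_mem (s := {i | (w.drop i).IsChain (· ≤ ·)}) ⟨w.length, by simp⟩

theorem lastRunStart_le (h : (w.drop i).IsChain (· ≤ ·)) : lastRunStart w ≤ i :=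
  Nat.sInf_le h

theorem le_lastRunStart (h : ∀ i < k, ¬(w.drop i).IsChain (· ≤ ·)) : k ≤ lastRunStart w :=
  not_lt.1 fun hlt => h _ hlt (isChain_terminalRun w)

theorem not_isChain_drop_of_lt_lastRunStart (h : i < lastRunStart w) :
    ¬(w.drop i).IsChain (· ≤ ·) :=
  Nat.notMem_of_lt_sInf h

theorem lastRunStart_lt_length (hw : w ≠ []) : lastRunStart w < w.length := by
  have hlast : (w.drop (w.length - 1)).IsChain (· ≤ ·) := by
    rw [List.drop_length_sub_one hw]; exact List.isChain_singleton _
  have := lastRunStart_le hlast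
  have := List.length_pos_iff.2 hw
  omega

theorem terminalRun_ne_nil (hw : w ≠ []) : terminalRun w ≠ [] := by
  simpa [terminalRun, List.drop_eq_nil_iff] using lastRunStart_lt_length hw

theorem terminalRunHead_eq_getD (w : List ℕ) : terminalRunHead w = w.getD (lastRunStart w) 0 := by
  simp [terminalRunHead, terminalRun, List.headD_eq_head?_getD, List.getD_eq_getElem?_getD]

theorem getLastD_terminalRun (hw : w ≠ []) : (terminalRun w).getLastD 0 = w.getLastD 0 := by
  simp [terminalRun, List.getLast?_drop, (lastRunStart_lt_length hw).not_ge]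

theorem terminalRunHead_le_getLastD (w : List ℕ) : terminalRunHead w ≤ w.getLastD 0 := by
  rcases eq_or_ne w [] with rfl | hw
  · simp [terminalRunHead, terminalRun]
  obtain ⟨a, u, hu⟩ := List.exists_cons_of_ne_nil (terminalRun_ne_nil hw)
  have hsorted := isChain_terminalRun w
  rw [hu] at hsorted
  rw [← getLastD_terminalRun hw, terminalRunHead, hu, List.headD_cons, List.getLastD_cons]
  exact List.IsChain.induction (a ≤ ·) _ hsorted (fun _ _ hxy h => h.trans hxy) (fun _ => le_rfl)
    _ List.getLastD_mem_cons

theorem isChain_drop_append_singleton_iff (hi : i < w.length) :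
    ((w ++ [c]).drop i).IsChain (· ≤ ·) ↔ (w.drop i).IsChain (· ≤ ·) ∧ w.getLastD 0 ≤ c := by
  rw [List.drop_append_of_le_length hi.le, List.isChain_append]
  have hw : w ≠ [] := List.ne_nil_of_length_pos (by omega)
  simp [List.getLast?_drop, hi.not_ge, List.getLast?_eq_some_getLast hw]

theorem terminalRun_append_singleton_of_le (hw : w ≠ []) (h : w.getLastD 0 ≤ c) :
    terminalRun (w ++ [c]) = terminalRun w ++ [c] := by
  have hlt := lastRunStart_lt_length hw
  have hstart : lastRunStart (w ++ [c]) = lastRunStart w := by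
    refine le_antisymm (lastRunStart_le ?_) (le_lastRunStart fun i hi hchain => ?_)
    · exact (isChain_drop_append_singleton_iff hlt).2 ⟨isChain_terminalRun w, h⟩
    · exact not_isChain_drop_of_lt_lastRunStart hi
        ((isChain_drop_append_singleton_iff (hi.trans hlt)).1 hchain).1
  rw [terminalRun, hstart, List.drop_append_of_le_length hlt.le, terminalRun]

theorem terminalRun_append_singleton_of_lt (h : c < w.getLastD 0) :
    terminalRun (w ++ [c]) = [c] := by
  have hstart : lastRunStart (w ++ [c]) = w.length := by
    refine le_antisymm (lastRunStart_le ?_) (le_lastRunStart fun i hi hchain => ?_)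
    · simp
    · exact absurd ((isChain_drop_append_singleton_iff hi).1 hchain).2 (not_le.2 h)
  rw [terminalRun, hstart, List.drop_left]

theorem terminalRunHead_append_singleton_of_le (hw : w ≠ []) (h : w.getLastD 0 ≤ c) :
    terminalRunHead (w ++ [c]) = terminalRunHead w := by
  obtain ⟨a, u, hu⟩ := List.exists_cons_of_ne_nil (terminalRun_ne_nil hw)
  rw [terminalRunHead, terminalRun_append_singleton_of_le hw h, terminalRunHead, hu]
  rfl

theorem trun_pos (hw : w ≠ []) : 0 < trun w :=
  card_pos.2 ((List.toFinset_nonempty_iff _).2 (terminalRun_ne_nil hw))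

theorem trun_append_singleton_of_lt (h : c < w.getLastD 0) : trun (w ++ [c]) = 1 := by
  rw [trun_eq_card_toFinset_terminalRun, terminalRun_append_singleton_of_lt h]
  rfl

end TerminalRun

section Catalan

variable {w : List ℕ} {c x : ℕ}

theorem isCatalan_iff_isChain :
    IsCatalan w ↔ w.head? = some 1 ∧ w.IsChain (fun x y => 1 ≤ y ∧ y ≤ x + 1) := by
  have hhead : w ≠ [] ∧ w.getD 0 0 = 1 ↔ w.head? = some 1 := by cases w <;> simp
  rw [IsCatalan, ← and_assoc, hhead, List.isChain_iff_getElem]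
  refine and_congr_right' (forall_congr' fun i => forall_congr' fun hi => ?_)
  rw [List.getD_eq_getElem _ _ hi, List.getD_eq_getElem _ _ (by omega)]

theorem IsCatalan.ne_nil (hw : IsCatalan w) : w ≠ [] :=
  hw.1

theorem IsCatalan.one_le_of_mem (hw : IsCatalan w) (hx : x ∈ w) : 1 ≤ x := by
  obtain ⟨hhead, hchain⟩ := isCatalan_iff_isChain.1 hw
  refine hchain.induction (1 ≤ ·) w (fun _ _ hxy _ => hxy.1) (fun hne => ?_) x hx
  simp_all [List.head?_eq_some_head hne]

theorem isCatalan_append_singleton_iff (hw : w ≠ []) :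
    IsCatalan (w ++ [c]) ↔ IsCatalan w ∧ 1 ≤ c ∧ c ≤ w.getLastD 0 + 1 := by
  simp [isCatalan_iff_isChain, List.isChain_append, List.head?_append, List.head?_eq_some_head hw,
    List.getLast?_eq_some_getLast hw, and_assoc]

theorem IsCatalan.isChain_terminalRun (hw : IsCatalan w) :
    (terminalRun w).IsChain (fun x y => x ≤ y ∧ y ≤ x + 1) := by
  have hstep : (terminalRun w).IsChain (fun x y => y ≤ x + 1) :=
    ((isCatalan_iff_isChain.1 hw).2.drop _).imp fun _ _ h => h.2
  have hle := List.isChain_iff_getElem.1 (_root_.isChain_terminalRun w)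
  exact List.isChain_iff_getElem.2 fun i hi => ⟨hle i hi, List.isChain_iff_getElem.1 hstep i hi⟩

theorem IsCatalan.trun_eq (hw : IsCatalan w) : trun w = w.getLastD 0 + 1 - terminalRunHead w := by
  obtain ⟨a, u, hu⟩ := List.exists_cons_of_ne_nil (terminalRun_ne_nil hw.ne_nil)
  have hchain := hw.isChain_terminalRun
  rw [hu] at hchain
  rw [trun_eq_card_toFinset_terminalRun, ← getLastD_terminalRun hw.ne_nil, terminalRunHead, hu,
    List.toFinset_eq_Icc_of_isChain hchain, Nat.card_Icc, List.headD_cons, List.getLastD_cons]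

theorem IsCatalan.one_le_terminalRunHead (hw : IsCatalan w) : 1 ≤ terminalRunHead w := by
  obtain ⟨a, u, hu⟩ := List.exists_cons_of_ne_nil (terminalRun_ne_nil hw.ne_nil)
  rw [terminalRunHead, hu, List.headD_cons]
  exact hw.one_le_of_mem (List.mem_of_mem_drop (hu ▸ List.mem_cons_self))

theorem IsCatalan.trun_append_singleton_of_le (hw : IsCatalan w) (h : w.getLastD 0 ≤ c)
    (hc : c ≤ w.getLastD 0 + 1) : trun (w ++ [c]) = c + 1 - terminalRunHead w := by
  have hone : 1 ≤ c := hw.one_le_terminalRunHead.trans ((terminalRunHead_le_getLastD w).trans h)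
  have hcat := (isCatalan_append_singleton_iff hw.ne_nil).2 ⟨hw, hone, hc⟩
  rw [hcat.trun_eq, List.getLastD_concat, terminalRunHead_append_singleton_of_le hw.ne_nil h]

theorem IsCatalan.sum_trun_append_singleton (hw : IsCatalan w) :
    ∑ c ∈ Icc (terminalRunHead w) (w.getLastD 0 + 1), trun (w ++ [c]) = 3 * trun w := by
  have hal := terminalRunHead_le_getLastD w
  have hlow : ∑ c ∈ Ico (terminalRunHead w) (w.getLastD 0), trun (w ++ [c]) =
      w.getLastD 0 - terminalRunHead w := by
    rw [sum_congr rfl fun c hc => trun_append_singleton_of_lt (mem_Ico.1 hc).2]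
    simp
  rw [← Ico_add_one_right_eq_Icc, sum_Ico_succ_top (by omega), sum_Ico_succ_top hal, hlow,
    hw.trun_append_singleton_of_le le_rfl (by omega),
    hw.trun_append_singleton_of_le (by omega) le_rfl, hw.trun_eq]
  omega

theorem IsCatalan.card_Icc_terminalRunHead (hw : IsCatalan w) :
    #(Icc (terminalRunHead w) (w.getLastD 0 + 1)) = trun w + 1 := by
  have := terminalRunHead_le_getLastD w
  rw [Nat.card_Icc, hw.trun_eq]
  omega

end Catalan

section Flattened

variable {w : List ℕ} {c i : ℕ}

theorem isChain_drop_iff_le_and_isChain_drop_succ (hi : i + 1 < w.length) :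
    (w.drop i).IsChain (· ≤ ·) ↔
      w.getD i 0 ≤ w.getD (i + 1) 0 ∧ (w.drop (i + 1)).IsChain (· ≤ ·) := by
  rw [List.drop_eq_getElem_cons (by omega : i < w.length), List.drop_eq_getElem_cons hi,
    List.isChain_cons_cons, List.getD_eq_getElem _ _ hi, List.getD_eq_getElem _ _ (by omega)]

theorem runStart_lastRunStart (hw : w ≠ []) : RunStart w (lastRunStart w) := by
  have hlt := lastRunStart_lt_length hw
  refine ⟨hlt, or_iff_not_imp_left.2 fun h0 => ?_⟩
  obtain ⟨k, hk⟩ : ∃ k, lastRunStart w = k + 1 := ⟨lastRunStart w - 1, by omega⟩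
  have hnot := not_isChain_drop_of_lt_lastRunStart (w := w) (i := k) (by omega)
  rw [isChain_drop_iff_le_and_isChain_drop_succ (by omega), ← hk] at hnot
  rw [show lastRunStart w - 1 = k by omega]
  exact not_le.1 fun hle => hnot ⟨hle, isChain_terminalRun w⟩

theorem RunStart.le_lastRunStart (h : RunStart w i) : i ≤ lastRunStart w := by
  obtain ⟨hi, h0 | hdesc⟩ := h
  · omega
  by_contra! hlt
  obtain ⟨j, rfl⟩ : ∃ j, i = j + 1 := ⟨i - 1, by omega⟩
  have hchain : (w.drop j).IsChain (· ≤ ·) := by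
    have := (isChain_terminalRun w).drop (j - lastRunStart w)
    rwa [terminalRun, List.drop_drop, Nat.add_sub_cancel' (by omega)] at this
  rw [Nat.add_sub_cancel] at hdesc
  exact absurd ((isChain_drop_iff_le_and_isChain_drop_succ hi).1 hchain).1 (not_le.2 hdesc)

theorem IsFlattened.getD_le_terminalRunHead (hf : IsFlattened w) (h : RunStart w i) :
    w.getD i 0 ≤ terminalRunHead w := by
  rw [terminalRunHead_eq_getD]
  exact hf _ _ h (runStart_lastRunStart (List.ne_nil_of_length_pos (by have := h.1; omega)))
    h.le_lastRunStart

theorem runStart_append_singleton_iff_of_lt (hi : i < w.length) :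
    RunStart (w ++ [c]) i ↔ RunStart w i := by
  rw [RunStart, RunStart, List.getD_append _ _ _ _ hi, List.getD_append _ _ _ _ (by omega),
    List.length_append]
  exact and_congr_left' ⟨fun _ => hi, fun _ => by simp; omega⟩

theorem getD_append_singleton_length : (w ++ [c]).getD w.length 0 = c := by
  simp

theorem runStart_append_singleton_length_iff (hw : w ≠ []) :
    RunStart (w ++ [c]) w.length ↔ c < w.getLastD 0 := by
  have hpos := List.length_pos_iff.2 hw
  have hlast : w.getD (w.length - 1) 0 = w.getLastD 0 := by
    simp [List.getD_eq_getElem?_getD, List.getLast?_eq_getElem?]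
  rw [RunStart, getD_append_singleton_length, List.getD_append _ _ _ _ (by omega), hlast]
  simp only [List.length_append, List.length_singleton, Nat.lt_succ_self, true_and, hpos.ne',
    false_or]

theorem isFlattened_append_singleton_iff (hw : w ≠ []) :
    IsFlattened (w ++ [c]) ↔ IsFlattened w ∧ terminalRunHead w ≤ c := by
  have hlt := lastRunStart_lt_length hw
  constructor
  · intro hf
    refine ⟨fun i j hi hj hij => ?_, ?_⟩
    · have := hf i j ((runStart_append_singleton_iff_of_lt hi.1).2 hi)
        ((runStart_append_singleton_iff_of_lt hj.1).2 hj) hij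
      rwa [List.getD_append _ _ _ _ hi.1, List.getD_append _ _ _ _ hj.1] at this
    · rcases lt_or_ge c (w.getLastD 0) with hcl | hcl
      · have := hf _ _ ((runStart_append_singleton_iff_of_lt hlt).2 (runStart_lastRunStart hw))
          ((runStart_append_singleton_length_iff hw).2 hcl) hlt.le
        rwa [List.getD_append _ _ _ _ hlt, getD_append_singleton_length,
          ← terminalRunHead_eq_getD] at this
      · exact (terminalRunHead_le_getLastD w).trans hcl
  · rintro ⟨hf, hhc⟩ i j hi hj hij
    have hj' : j < w.length + 1 := by simpa using hj.1
    rcases Nat.lt_succ_iff_lt_or_eq.1 hj' with hjw | rfl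
    · have hiw : i < w.length := by omega
      rw [List.getD_append _ _ _ _ hiw, List.getD_append _ _ _ _ hjw]
      exact hf i j ((runStart_append_singleton_iff_of_lt hiw).1 hi)
        ((runStart_append_singleton_iff_of_lt hjw).1 hj) hij
    · rcases Nat.lt_or_ge i w.length with hiw | hiw
      · rw [List.getD_append _ _ _ _ hiw, getD_append_singleton_length]
        exact (hf.getD_le_terminalRunHead
          ((runStart_append_singleton_iff_of_lt hiw).1 hi)).trans hhc
      · rw [show i = w.length by omega]

end Flattened

theorem append_singleton_mem_flatCat_iff {w : List ℕ} {c n : ℕ} (hw : w ≠ []) :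
    w ++ [c] ∈ FlatCat (n + 1) ↔
      w ∈ FlatCat n ∧ c ∈ Icc (terminalRunHead w) (w.getLastD 0 + 1) := by
  simp only [FlatCat, Set.mem_ofPred_eq, List.length_append, List.length_singleton,
    Nat.add_right_cancel_iff, isCatalan_append_singleton_iff hw,
    isFlattened_append_singleton_iff hw, mem_Icc]
  constructor
  · rintro ⟨hlen, ⟨hcat, -, hcl⟩, hf, hhc⟩
    exact ⟨⟨hlen, hcat, hf⟩, hhc, hcl⟩
  · rintro ⟨⟨hlen, hcat, hf⟩, hhc, hcl⟩
    exact ⟨hlen, ⟨hcat, hcat.one_le_terminalRunHead.trans hhc, hcl⟩, hf, hhc⟩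

theorem flatCat_one : FlatCat 1 = {[1]} := by
  ext w
  simp only [FlatCat, Set.mem_ofPred_eq, Set.mem_singleton_iff, List.length_eq_one_iff]
  constructor
  · rintro ⟨⟨x, rfl⟩, hcat, -⟩
    simpa [isCatalan_iff_isChain] using hcat
  · rintro rfl
    refine ⟨⟨1, rfl⟩, isCatalan_iff_isChain.2 (by simp), fun i j hi hj _ => ?_⟩
    rw [show i = 0 by simpa using hi.1, show j = 0 by simpa using hj.1]

/-- The words of `FlatCat (n + 1)`, generated by appending one letter at a time. -/
noncomputable def flatCatFinset : ℕ → Finset (List ℕ)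
  | 0 => {[1]}
  | n + 1 => ((flatCatFinset n).sigma fun w => Icc (terminalRunHead w) (w.getLastD 0 + 1)).image
      fun p => p.1 ++ [p.2]

theorem coe_flatCatFinset (n : ℕ) : (flatCatFinset n : Set (List ℕ)) = FlatCat (n + 1) := by
  induction n with
  | zero => simp [flatCatFinset, flatCat_one]
  | succ n ih =>
    ext w
    simp only [flatCatFinset, coe_image, coe_sigma, Set.mem_image, Set.mem_sigma_iff, ih,
      Sigma.exists, mem_coe]
    constructor
    · rintro ⟨v, c, ⟨hv, hc⟩, rfl⟩
      exact (append_singleton_mem_flatCat_iff hv.2.1.ne_nil).2 ⟨hv, hc⟩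
    · intro hw
      have hne : w ≠ [] := hw.2.1.ne_nil
      have hprefix : w.dropLast ≠ [] := by
        rw [← List.length_pos_iff, List.length_dropLast, hw.1]
        omega
      rw [← List.dropLast_append_getLast hne] at hw
      exact ⟨_, _, (append_singleton_mem_flatCat_iff hprefix).1 hw,
        List.dropLast_append_getLast hne⟩

theorem mem_flatCatFinset {w : List ℕ} {n : ℕ} : w ∈ flatCatFinset n ↔ w ∈ FlatCat (n + 1) := by
  rw [← mem_coe, coe_flatCatFinset]

theorem sum_flatCatFinset_succ {M : Type*} [AddCommMonoid M] (n : ℕ) (f : List ℕ → M) :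
    ∑ w ∈ flatCatFinset (n + 1), f w =
      ∑ w ∈ flatCatFinset n, ∑ c ∈ Icc (terminalRunHead w) (w.getLastD 0 + 1), f (w ++ [c]) := by
  rw [flatCatFinset, sum_image, sum_sigma]
  rintro ⟨w, c⟩ - ⟨w', c'⟩ - h
  obtain ⟨rfl, hc⟩ := List.append_inj' h rfl
  simp_all


theorem sum_trun_flatCatFinset (n : ℕ) : ∑ w ∈ flatCatFinset n, trun w = 3 ^ n := by
  induction n with
  | zero =>
    have hcat : IsCatalan [1] := isCatalan_iff_isChain.2 (by simp)
    have hhead : terminalRunHead [1] = 1 :=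
      le_antisymm (terminalRunHead_le_getLastD [1]) hcat.one_le_terminalRunHead
    simp [flatCatFinset, hcat.trun_eq, hhead]
  | succ n ih =>
    rw [sum_flatCatFinset_succ, sum_congr rfl fun w hw =>
      (mem_flatCatFinset.1 hw).2.1.sum_trun_append_singleton, ← mul_sum, ih, pow_succ']

theorem two_mul_card_flatCatFinset (n : ℕ) : 2 * #(flatCatFinset n) = 3 ^ n + 1 := by
  induction n with
  | zero => simp [flatCatFinset]
  | succ n ih =>
    rw [card_eq_sum_ones, sum_flatCatFinset_succ]
    simp only [← card_eq_sum_ones]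
    rw [sum_congr rfl fun w hw => (mem_flatCatFinset.1 hw).2.1.card_Icc_terminalRunHead,
      sum_add_distrib, sum_trun_flatCatFinset, ← card_eq_sum_ones, pow_succ]
    omega

/-- For every `n ≥ 1`, twice the sum over all flattened Catalan words of
length `n` of `trun(π) − 1` equals `3^(n−1) − 1`. -/
theorem sum_trun_sub_one (n : ℕ) (hn : 1 ≤ n) :
    2 * (∑ᶠ w ∈ FlatCat n, (trun w - 1)) = 3 ^ (n - 1) - 1 := by
  obtain ⟨m, rfl⟩ := Nat.exists_eq_add_of_le' hn
  have htrun_pos : ∀ w ∈ flatCatFinset m, 1 ≤ trun w := fun w hw =>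
    trun_pos (mem_flatCatFinset.1 hw).2.1.ne_nil
  rw [← coe_flatCatFinset, finsum_mem_coe_finset, sum_tsub_distrib _ htrun_pos,
    sum_trun_flatCatFinset, ← card_eq_sum_ones, Nat.add_sub_cancel]
  have := two_mul_card_flatCatFinset m
  omega
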